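/- arXiv:1911.08613 — 2 statements merged into one kernel-verified Lean document; each statement's English description precedes it below -/
import Mathlib

section
/- Fix a natural number n ≥ 0 and a real α with 0 ≤ α ≤ 1/2. Then the function F : [0,∞) → ℝ defined by F(t) = e^{-t}·α + (1 − e^{-t})·∑_{k=n+1}^{2n+1} C(2n+1,k) α^{k}(1-α)^{2n+1-k} is monotone nonincreasing in t on [0,∞). -/
lemma choose_tail_sum (n : ℕ) :
    ∑ k ∈ Finset.Icc (n + 1) (2 * n + 1), Nat.choose (2 * n + 1) k = 4 ^ n := by
  have h2 : ∑ k ∈ Finset.range (2 * n + 1 + 1), (2 * n + 1).choose k = 2 ^ (2 * n + 1) :=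
    Nat.sum_range_choose (2 * n + 1)
  have h3 : ∑ k ∈ Finset.range (n + 1), (2 * n + 1).choose k = 4 ^ n :=
    Nat.sum_range_choose_halfway n
  have hIcc : Finset.Icc (n + 1) (2 * n + 1) = Finset.Ico (n + 1) (2 * n + 1 + 1) := by
    rw [Finset.Ico_add_one_right_eq_Icc]
  have hcons : ∑ k ∈ Finset.range (n + 1), (2 * n + 1).choose k +
      ∑ k ∈ Finset.Ico (n + 1) (2 * n + 1 + 1), (2 * n + 1).choose k =
      ∑ k ∈ Finset.range (2 * n + 1 + 1), (2 * n + 1).choose k := by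
    rw [Finset.range_eq_Ico, Finset.range_eq_Ico]
    exact Finset.sum_Ico_consecutive _ (Nat.zero_le _) (by omega : n + 1 ≤ 2 * n + 1 + 1)
  have hpow : 2 ^ (2 * n + 1) = 2 * 4 ^ n := by
    rw [show 2 * n + 1 = 2 * n + 1 from rfl, pow_succ, pow_mul]
    ring
  rw [hIcc]
  omega

lemma tail_le (n : ℕ) (α : ℝ) (hα0 : 0 ≤ α) (hα : α ≤ 1 / 2) :
    ∑ k ∈ Finset.Icc (n + 1) (2 * n + 1),
      (Nat.choose (2 * n + 1) k : ℝ) * α ^ k * (1 - α) ^ (2 * n + 1 - k) ≤ α := by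
  have h1α0 : (0:ℝ) ≤ 1 - α := by linarith
  have hα1 : α ≤ 1 - α := by linarith
  have hterm : ∀ k ∈ Finset.Icc (n + 1) (2 * n + 1),
      (Nat.choose (2 * n + 1) k : ℝ) * α ^ k * (1 - α) ^ (2 * n + 1 - k) ≤
        (Nat.choose (2 * n + 1) k : ℝ) * (α ^ (n + 1) * (1 - α) ^ n) := by
    intro k hk
    simp only [Finset.mem_Icc] at hk
    have key : α ^ k * (1 - α) ^ (2 * n + 1 - k) ≤ α ^ (n + 1) * (1 - α) ^ n := by
      obtain ⟨a, rfl⟩ : ∃ a, k = n + 1 + a := ⟨k - (n + 1), by omega⟩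
      rw [show 2 * n + 1 - (n + 1 + a) = n - a from by omega, pow_add α (n + 1) a]
      calc α ^ (n + 1) * α ^ a * (1 - α) ^ (n - a)
          ≤ α ^ (n + 1) * (1 - α) ^ a * (1 - α) ^ (n - a) :=
            mul_le_mul_of_nonneg_right
              (mul_le_mul_of_nonneg_left (pow_le_pow_left₀ hα0 hα1 a) (pow_nonneg hα0 _))
              (pow_nonneg h1α0 _)
        _ = α ^ (n + 1) * (1 - α) ^ n := by
            rw [mul_assoc, ← pow_add, show a + (n - a) = n from by omega]
    calc (Nat.choose (2 * n + 1) k : ℝ) * α ^ k * (1 - α) ^ (2 * n + 1 - k)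
        = (Nat.choose (2 * n + 1) k : ℝ) * (α ^ k * (1 - α) ^ (2 * n + 1 - k)) := by ring
      _ ≤ (Nat.choose (2 * n + 1) k : ℝ) * (α ^ (n + 1) * (1 - α) ^ n) :=
          mul_le_mul_of_nonneg_left key (Nat.cast_nonneg _)
  calc ∑ k ∈ Finset.Icc (n + 1) (2 * n + 1),
        (Nat.choose (2 * n + 1) k : ℝ) * α ^ k * (1 - α) ^ (2 * n + 1 - k)
      ≤ ∑ k ∈ Finset.Icc (n + 1) (2 * n + 1),
        (Nat.choose (2 * n + 1) k : ℝ) * (α ^ (n + 1) * (1 - α) ^ n) :=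
        Finset.sum_le_sum hterm
    _ = (4 : ℝ) ^ n * (α ^ (n + 1) * (1 - α) ^ n) := by
        rw [← Finset.sum_mul]
        congr 1
        rw [← Nat.cast_sum, choose_tail_sum]
        push_cast; ring
    _ = α * (4 * (α * (1 - α))) ^ n := by
        rw [mul_pow, mul_pow, pow_succ]; ring
    _ ≤ α * 1 := by
        apply mul_le_mul_of_nonneg_left _ hα0
        apply pow_le_one₀
        · positivity
        · nlinarith [sq_nonneg (1 - 2 * α)]
    _ = α := mul_one α

/-- Monotonicity in time of the marginal `μ_t(α)` of median dynamics on `K_{2n+1}`. -/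
theorem stmt_2 (n : ℕ) (α : ℝ) (hα0 : 0 ≤ α) (hα : α ≤ 1 / 2) :
    AntitoneOn (fun t : ℝ =>
        Real.exp (-t) * α + (1 - Real.exp (-t)) *
          ∑ k ∈ Finset.Icc (n + 1) (2 * n + 1),
            (Nat.choose (2 * n + 1) k : ℝ) * α ^ k * (1 - α) ^ (2 * n + 1 - k))
      (Set.Ici (0 : ℝ)) := by
  intro x _ y _ hxy
  simp only
  set S := ∑ k ∈ Finset.Icc (n + 1) (2 * n + 1),
    (Nat.choose (2 * n + 1) k : ℝ) * α ^ k * (1 - α) ^ (2 * n + 1 - k) with hS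
  have hSle : S ≤ α := tail_le n α hα0 hα
  have he : Real.exp (-y) ≤ Real.exp (-x) := Real.exp_le_exp.mpr (by linarith)
  nlinarith [mul_nonneg (sub_nonneg.2 he) (sub_nonneg.2 hSle)]
end

section
/- Fix a natural number n ≥ 1 and a real α with 0 ≤ α ≤ 1/2. Then the function F : [0,∞) → ℝ defined by F(t) = e^{-t}·α + (1 − e^{-t})·(∑_{k=n+1}^{2n} C(2n,k) α^{k}(1-α)^{2n-k} + (1/2)·C(2n,n)·(α(1-α))^{n}) is monotone nonincreasing in t on [0,∞). -/
lemma binom_mean (m : ℕ) (α : ℝ) :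
    ∑ k ∈ Finset.range (m + 1), (k : ℝ) * ((Nat.choose m k : ℝ) * α ^ k * (1 - α) ^ (m - k))
      = m * α := by
  have h := congrArg (Polynomial.eval α) (bernsteinPolynomial.sum_smul ℝ m)
  simpa [bernsteinPolynomial, Polynomial.eval_finset_sum, mul_assoc, mul_comm, mul_left_comm]
    using h

lemma key_ineq (n : ℕ) (hn : 1 ≤ n) (α : ℝ) (hα0 : 0 ≤ α) (hα : α ≤ 1 / 2) :
    (∑ k ∈ Finset.Icc (n + 1) (2 * n),
        (Nat.choose (2 * n) k : ℝ) * α ^ k * (1 - α) ^ (2 * n - k))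
      + (1 / 2) * (Nat.choose (2 * n) n : ℝ) * (α * (1 - α)) ^ n ≤ α := by
  set p : ℕ → ℝ := fun k => (Nat.choose (2 * n) k : ℝ) * α ^ k * (1 - α) ^ (2 * n - k) with hp
  have hmean : ∑ k ∈ Finset.range (2 * n + 1), (k : ℝ) * p k = (2 * n) * α := by
    simpa [hp] using binom_mean (2 * n) α
  -- split the sum
  have hsplit : ∑ k ∈ Finset.range (2 * n + 1), (k : ℝ) * p k
      = (∑ k ∈ Finset.range n, (k : ℝ) * p k) + (n : ℝ) * p n
        + ∑ k ∈ Finset.Icc (n + 1) (2 * n), (k : ℝ) * p k := by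
    have h1 : Finset.range (2 * n + 1) = Finset.Ico 0 (2 * n + 1) := by
      rw [Finset.range_eq_Ico]
    rw [h1, ← Finset.sum_Ico_consecutive (fun k => (k : ℝ) * p k)
        (Nat.zero_le (n + 1)) (by omega : n + 1 ≤ 2 * n + 1)]
    rw [← Finset.range_eq_Ico, Finset.sum_range_succ, ← Finset.Ico_add_one_right_eq_Icc]
  -- rewrite the Icc sum
  have hIcc : ∑ k ∈ Finset.Icc (n + 1) (2 * n), (k : ℝ) * p k
      = (2 * n : ℝ) * (∑ k ∈ Finset.Icc (n + 1) (2 * n), p k)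
        - ∑ k ∈ Finset.Icc (n + 1) (2 * n), ((2 * n : ℝ) - k) * p k := by
    rw [Finset.mul_sum, ← Finset.sum_sub_distrib]
    apply Finset.sum_congr rfl
    intro k hk; ring
  -- reindex
  have hre : ∑ k ∈ Finset.Icc (n + 1) (2 * n), ((2 * n : ℝ) - k) * p k
      = ∑ j ∈ Finset.range n, (j : ℝ) * p (2 * n - j) := by
    rw [← Finset.Ico_add_one_right_eq_Icc, Finset.sum_Ico_eq_sum_range]
    have h2 : 2 * n + 1 - (n + 1) = n := by omega
    rw [h2]
    rw [← Finset.sum_range_reflect (fun j => (j : ℝ) * p (2 * n - j)) n]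
    apply Finset.sum_congr rfl
    intro i hi
    have hi' : i < n := Finset.mem_range.mp hi
    have e1 : 2 * n - (n - 1 - i) = n + 1 + i := by omega
    have e2 : ((n - 1 - i : ℕ) : ℝ) = (2 * n : ℝ) - ((n + 1 + i : ℕ) : ℝ) := by
      push_cast [Nat.cast_sub (by omega : i ≤ n - 1), Nat.cast_sub (by omega : 1 ≤ n)]
      ring
    rw [e1, e2]
  -- pointwise nonnegativity
  have hpt : ∀ j ∈ Finset.range n, 0 ≤ (j : ℝ) * (p j - p (2 * n - j)) := by
    intro j hj
    have hj' : j < n := Finset.mem_range.mp hj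
    apply mul_nonneg (Nat.cast_nonneg j)
    have hc : (Nat.choose (2 * n) (2 * n - j) : ℝ) = (Nat.choose (2 * n) j : ℝ) := by
      rw [Nat.choose_symm (by omega : j ≤ 2 * n)]
    have e3 : 2 * n - (2 * n - j) = j := by omega
    have e4 : 2 * n - j = j + (2 * n - 2 * j) := by omega
    have hb : α ^ (2 * n - 2 * j) ≤ (1 - α) ^ (2 * n - 2 * j) :=
      pow_le_pow_left₀ hα0 (by linarith) _
    have hnn : (0 : ℝ) ≤ (Nat.choose (2 * n) j : ℝ) * α ^ j * (1 - α) ^ j :=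
      mul_nonneg (mul_nonneg (Nat.cast_nonneg _) (pow_nonneg hα0 _))
        (pow_nonneg (by linarith) _)
    have key := mul_le_mul_of_nonneg_left hb hnn
    have epj : p j = (Nat.choose (2 * n) j : ℝ) * α ^ j * (1 - α) ^ j
        * (1 - α) ^ (2 * n - 2 * j) := by
      simp only [hp]
      rw [e4, pow_add]; ring
    have epn : p (2 * n - j) = (Nat.choose (2 * n) j : ℝ) * α ^ j * (1 - α) ^ j
        * α ^ (2 * n - 2 * j) := by
      simp only [hp]
      rw [hc, e3, e4, pow_add]; ring
    rw [epj, epn]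
    linarith [key]
  have hsum : 0 ≤ ∑ j ∈ Finset.range n, (j : ℝ) * (p j - p (2 * n - j)) :=
    Finset.sum_nonneg hpt
  have hexpand : ∑ j ∈ Finset.range n, (j : ℝ) * (p j - p (2 * n - j))
      = (∑ j ∈ Finset.range n, (j : ℝ) * p j)
        - ∑ j ∈ Finset.range n, (j : ℝ) * p (2 * n - j) := by
    rw [← Finset.sum_sub_distrib]
    apply Finset.sum_congr rfl
    intro j hj; ring
  have hpn : p n = (Nat.choose (2 * n) n : ℝ) * (α * (1 - α)) ^ n := by
    simp only [hp]
    have : 2 * n - n = n := by omega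
    rw [this, mul_pow]; ring
  have hnpos : (0 : ℝ) < 2 * n := by positivity
  rw [hsplit, hIcc, hre] at hmean
  rw [hexpand] at hsum
  have hpn' : (1 : ℝ) / 2 * (Nat.choose (2 * n) n : ℝ) * (α * (1 - α)) ^ n
      = 1 / 2 * p n := by rw [hpn]; ring
  rw [hpn']
  have heq : (2 * (n : ℝ)) * (α - ((∑ k ∈ Finset.Icc (n + 1) (2 * n), p k) + 1 / 2 * p n))
      = (∑ j ∈ Finset.range n, (j : ℝ) * p j)
        - ∑ j ∈ Finset.range n, (j : ℝ) * p (2 * n - j) := by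
    linear_combination -hmean
  nlinarith [heq, hsum, hnpos]

/-- Monotonicity in time of the marginal `μ_t(α)` of median dynamics on `K_{2n}`. -/
theorem stmt_5 (n : ℕ) (hn : 1 ≤ n) (α : ℝ) (hα0 : 0 ≤ α) (hα : α ≤ 1 / 2) :
    AntitoneOn (fun t : ℝ =>
        Real.exp (-t) * α + (1 - Real.exp (-t)) *
          ((∑ k ∈ Finset.Icc (n + 1) (2 * n),
              (Nat.choose (2 * n) k : ℝ) * α ^ k * (1 - α) ^ (2 * n - k))
            + (1 / 2) * (Nat.choose (2 * n) n : ℝ) * (α * (1 - α)) ^ n))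
      (Set.Ici (0 : ℝ)) := by
  have hS := key_ineq n hn α hα0 hα
  intro a _ b _ hab
  simp only
  have hexp : Real.exp (-b) ≤ Real.exp (-a) := Real.exp_le_exp.mpr (by linarith)
  nlinarith [hexp, hS]
end
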